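/- Let G be an n-vertex graph and suppose each vertex is independently sampled into a set V' with probability q = (c ln n)/(√n − 1) for a constant c ≥ 4. Then with probability at least 1 − n^{−(c−3)}, every path P in the fixed canonical family 𝒫 of hop-limited shortest paths with at least √n hops contains at least one internal vertex belonging to V'. -/

import Mathlib

/-! A path with at least `√n` hops has at least `√n - 1` distinct internal vertices, each
sampled independently with probability `q`, so all of them are missed with probability
`(1 - q)^(√n - 1) ≤ exp (-q (√n - 1)) = n^(-c)`. A union bound over the at most `n³` paths
of the family leaves a failure probability of at most `n³ · n^(-c)`. -/

open scoped ENNReal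

namespace Stmt4

variable {V : Type*}

/-- Endpoint of a walk starting at `u` with subsequent vertices given by the list. -/
def last : V → List V → V
  | u, [] => u
  | _, x :: xs => last x xs

/-- Weight of a walk starting at `u` with subsequent vertices given by the list. -/
noncomputable def cost (w : V → V → ℝ≥0∞) : V → List V → ℝ≥0∞
  | _, [] => 0
  | u, x :: xs => w u x + cost w x xs

/-- `h`-hop-limited distance from `u` to `v` (non-edges have weight `⊤`). -/
noncomputable def hdist (w : V → V → ℝ≥0∞) (h : ℕ) (u v : V) : ℝ≥0∞ :=
  ⨅ p ∈ {p : List V | p.length ≤ h ∧ last u p = v}, cost w u p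

/-- Shortest-path distance from `u` to `v`. -/
noncomputable def dist (w : V → V → ℝ≥0∞) (u v : V) : ℝ≥0∞ :=
  ⨅ h : ℕ, hdist w h u v

/-- `S` is a set of (at most) `k` closest reachable vertices to `v` (excluding `v`),
with ties broken arbitrarily: members of `S` are reachable and distinct from `v`,
`|S| ≤ k`, every member is at least as close as every reachable non-member, and `S`
has exactly `k` elements unless it already contains all reachable vertices. -/
def IsKClosest [Fintype V] (w : V → V → ℝ≥0∞) (k : ℕ) (v : V) (S : Finset V) : Prop :=
  (∀ u ∈ S, u ≠ v ∧ dist w v u < ⊤) ∧ S.card ≤ k ∧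
  (∀ y ∈ S, ∀ z, z ∉ S → z ≠ v → dist w v z < ⊤ → dist w v y ≤ dist w v z) ∧
  (∀ z, z ∉ S → z ≠ v → dist w v z < ⊤ → S.card = k)

/-- Weight function of the union `G ∪ G^(k)` of the graph with the `k`-shortcut hopset:
hopset edges `(u,v)` (present when `u ∈ S v` or `v ∈ S u`) get weight `d_G(u,v)`. -/
noncomputable def unionW [Fintype V] [DecidableEq V] (w : V → V → ℝ≥0∞) (S : V → Finset V)
    (u v : V) : ℝ≥0∞ :=
  if u ∈ S v ∨ v ∈ S u then min (w u v) (dist w u v) else w u v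


/-- `p` is the canonical `i`-hop-limited shortest `u`–`v` path: it has at most `i`
edges, ends at `v`, has minimum weight (equal to the `i`-limited distance), and among
such paths it has the fewest edges and is lexicographically smallest with respect to
the vertex identifiers `ids` (comparing vertex sequences from the tail `u`). -/
def CanonicalPath (w : V → V → ℝ≥0∞) (ids : V → ℕ) (i : ℕ) (u v : V) (p : List V) : Prop :=
  p.length ≤ i ∧ last u p = v ∧ cost w u p = hdist w i u v ∧
  ∀ q : List V, q.length ≤ i → last u q = v → cost w u q = hdist w i u v →
    p.length ≤ q.length ∧
    (p.length = q.length → ¬ List.Lex (· < ·) ((u :: q).map ids) ((u :: p).map ids))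

open MeasureTheory

theorem one_sub_card_mul_le_measure_forall {Ω ι : Type*} [MeasurableSpace Ω] (μ : Measure Ω)
    [IsProbabilityMeasure μ] (S : Finset ι) (p : ι → Ω → Prop) (ε : ℝ≥0∞)
    (hε : ∀ i ∈ S, μ {ω | ¬ p i ω} ≤ ε) :
    1 - S.card * ε ≤ μ {ω | ∀ i ∈ S, p i ω} := by
  set A := {ω | ∀ i ∈ S, p i ω}
  have hbad : μ Aᶜ ≤ S.card * ε :=
    calc μ Aᶜ = μ (⋃ i ∈ S, {ω | ¬ p i ω}) := by congr 1; ext ω; simp [A]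
      _ ≤ ∑ i ∈ S, μ {ω | ¬ p i ω} := measure_biUnion_finset_le S _
      _ ≤ S.card * ε := by simpa using Finset.sum_le_card_nsmul S _ ε hε
  rw [tsub_le_iff_right]
  calc 1 = μ Set.univ := measure_univ.symm
    _ ≤ μ A + μ Aᶜ := measure_univ_le_add_compl A
    _ ≤ μ A + S.card * ε := by gcongr

theorem Measure.pi_setOf_forall_mem {ι : Type*} [Fintype ι] {X : ι → Type*}
    [∀ i, MeasurableSpace (X i)] (μ : ∀ i, Measure (X i)) [∀ i, IsProbabilityMeasure (μ i)]
    (T : Finset ι) (s : ∀ i, Set (X i)) :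
    Measure.pi μ {x | ∀ i ∈ T, x i ∈ s i} = ∏ i ∈ T, μ i (s i) := by
  classical
  have hbox : {x : ∀ i, X i | ∀ i ∈ T, x i ∈ s i} =
      Set.univ.pi (fun i => if i ∈ T then s i else Set.univ) := by
    ext x; simp only [Set.mem_ofPred_eq, Set.mem_pi, Set.mem_univ, true_implies]
    refine forall_congr' fun i => ?_
    split_ifs <;> simp [*]
  rw [hbox, Measure.pi_pi]
  simp only [apply_ite (μ _), measure_univ]
  rw [Finset.prod_ite_mem, Finset.univ_inter]

theorem PMF.bernoulli_toMeasure_false (q : NNReal) (h : q ≤ 1) :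
    (PMF.bernoulli q h).toMeasure {false} = 1 - q := by
  rw [PMF.toMeasure_apply_singleton _ _ (measurableSet_singleton _), PMF.bernoulli_apply]
  simp [ENNReal.coe_sub]

theorem List.card_toFinset_tail_dropLast {α : Type*} [DecidableEq α] {s : List α}
    (hs : s.Nodup) : s.tail.dropLast.toFinset.card = s.length - 2 := by
  rw [List.toFinset_card_of_nodup (hs.tail.sublist (List.dropLast_sublist _))]
  simp only [List.length_dropLast, List.length_tail]
  omega

theorem measure_pi_bernoulli_forall_false [Fintype V] (q : NNReal) (hq : q ≤ 1) (T : Finset V) :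
    Measure.pi (fun _ : V => (PMF.bernoulli q hq).toMeasure) {ω | ∀ x ∈ T, ω x = false} =
      (1 - q) ^ T.card := by
  simp_rw [← Set.mem_singleton_iff (b := false)]
  rw [Measure.pi_setOf_forall_mem, Finset.prod_const, PMF.bernoulli_toMeasure_false]

theorem measure_pi_bernoulli_internal_all_false [Fintype V] (q : NNReal) (hq : q ≤ 1)
    {s : List V} (hs : s.Nodup) :
    Measure.pi (fun _ : V => (PMF.bernoulli q hq).toMeasure)
      {ω | ∀ x ∈ s.tail.dropLast, ω x = false} = (1 - q) ^ (s.length - 2) := by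
  classical
  rw [← List.card_toFinset_tail_dropLast hs, ← measure_pi_bernoulli_forall_false q hq]
  simp

theorem one_sub_pow_le_rpow_neg {x c r t : ℝ} (hx : 0 < x) (hr0 : 0 ≤ r) (hr1 : r ≤ 1)
    (hrt : c * Real.log x ≤ r * t) {m : ℕ} (hm : t ≤ m) :
    (1 - r) ^ m ≤ x ^ (-c) :=
  calc (1 - r) ^ m ≤ Real.exp (-r) ^ m :=
        pow_le_pow_left₀ (by linarith) (Real.one_sub_le_exp_neg r) m
    _ = Real.exp (-(r * m)) := by rw [← Real.exp_nat_mul]; ring_nf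
    _ ≤ Real.exp (-(c * Real.log x)) :=
        Real.exp_le_exp.mpr (by nlinarith [mul_le_mul_of_nonneg_left hm hr0])
    _ = x ^ (-c) := by rw [Real.rpow_def_of_pos hx]; ring_nf

theorem one_sub_toNNReal_pow_le_ofReal_rpow_neg {x c r t : ℝ} (hx : 0 < x) (hr0 : 0 ≤ r)
    (hr1 : r ≤ 1) (hrt : c * Real.log x ≤ r * t) {m : ℕ} (hm : t ≤ m) :
    (1 - (r.toNNReal : ℝ≥0∞)) ^ m ≤ ENNReal.ofReal x ^ (-c) := by
  change (1 - ENNReal.ofReal r) ^ m ≤ _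
  rw [← ENNReal.ofReal_one, ← ENNReal.ofReal_sub _ hr0, ← ENNReal.ofReal_pow (by linarith),
    ENNReal.ofReal_rpow_of_pos hx]
  exact ENNReal.ofReal_le_ofReal (one_sub_pow_le_rpow_neg hx hr0 hr1 hrt hm)

theorem sampled_hits_long_paths_general [Fintype V]
    (n : ℕ) (hn2 : 2 ≤ n)
    (c : ℝ) (hc : 4 ≤ c)
    (hq1 : ENNReal.ofReal (c * Real.log n / (Real.sqrt n - 1)) ≤ 1)
    (Ps : Finset (List V)) (hcard : Ps.card ≤ n ^ 3)
    (hnodup : ∀ s ∈ Ps, s.Nodup) :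
    1 - (n : ℝ≥0∞) ^ (-(c - 3)) ≤
      Measure.pi (fun _ : V => (PMF.bernoulli (Real.toNNReal (c * Real.log n / (Real.sqrt n - 1)))
        (ENNReal.coe_le_one_iff.mp hq1)).toMeasure)
        {ω : V → Bool | ∀ s ∈ Ps, Real.sqrt n ≤ (s.length : ℝ) - 1 →
          ∃ x ∈ s.tail.dropLast, ω x = true} := by
  set r := c * Real.log n / (Real.sqrt n - 1) with hr
  have hsqrt : 1 < Real.sqrt n := Real.lt_sqrt_of_sq_lt (by exact_mod_cast (by omega : 1 ^ 2 < n))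
  have hr0 : 0 ≤ r :=
    div_nonneg (mul_nonneg (by linarith) (Real.log_natCast_nonneg n)) (by linarith)
  have hrt : c * Real.log n = r * (Real.sqrt n - 1) := by
    rw [hr, div_mul_cancel₀ _ (by linarith)]
  have hmiss : ∀ s ∈ Ps, Measure.pi (fun _ : V => (PMF.bernoulli r.toNNReal
      (ENNReal.coe_le_one_iff.mp hq1)).toMeasure) {ω | ¬ (Real.sqrt n ≤ (s.length : ℝ) - 1 →
        ∃ x ∈ s.tail.dropLast, ω x = true)} ≤ (n : ℝ≥0∞) ^ (-c) := by
    intro s hs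
    by_cases hlong : Real.sqrt n ≤ (s.length : ℝ) - 1
    · have hhops : Real.sqrt n - 1 ≤ ((s.length - 2 : ℕ) : ℝ) := by
        rw [Nat.cast_sub (by exact_mod_cast (by linarith : (2 : ℝ) ≤ s.length))]
        push_cast; linarith
      simpa [hlong, measure_pi_bernoulli_internal_all_false _ _ (hnodup s hs)] using
        one_sub_toNNReal_pow_le_ofReal_rpow_neg (x := n) (by positivity) hr0
          (ENNReal.ofReal_le_one.mp hq1) hrt.le hhops
    · simp [hlong]
  have hn0 : (n : ℝ≥0∞) ≠ 0 := by norm_cast; omega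
  calc 1 - (n : ℝ≥0∞) ^ (-(c - 3)) = 1 - ((n ^ 3 : ℕ) : ℝ≥0∞) * (n : ℝ≥0∞) ^ (-c) := by
        rw [Nat.cast_pow, ← ENNReal.rpow_natCast,
          ← ENNReal.rpow_add _ _ hn0 (ENNReal.natCast_ne_top n)]
        ring_nf
    _ ≤ 1 - Ps.card * (n : ℝ≥0∞) ^ (-c) := by gcongr
    _ ≤ _ := one_sub_card_mul_le_measure_forall _ Ps _ _ hmiss

/-- With each vertex sampled independently with probability `q = c·ln n/(√n − 1)`,
with probability at least `1 − n^{−(c−3)}` every canonical hop-limited shortest path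
with at least `√n` hops contains an internal sampled vertex. -/
theorem sampled_hits_long_paths [Fintype V]
    (w : V → V → ℝ≥0∞) (ids : V → ℕ) (hids : Function.Injective ids)
    (n : ℕ) (hn : n = Fintype.card V) (hn2 : 2 ≤ n)
    (c : ℝ) (hc : 4 ≤ c)
    (hq1 : ENNReal.ofReal (c * Real.log n / (Real.sqrt n - 1)) ≤ 1)
    (Ps : Finset (List V)) (hcard : Ps.card ≤ n ^ 3)
    (hnodup : ∀ s ∈ Ps, s.Nodup)
    (hcanon : ∀ s ∈ Ps, ∃ (i : ℕ) (u v : V) (p : List V),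
      s = u :: p ∧ CanonicalPath w ids i u v p) :
    1 - (n : ℝ≥0∞) ^ (-(c - 3)) ≤
      Measure.pi (fun _ : V => (PMF.bernoulli (Real.toNNReal (c * Real.log n / (Real.sqrt n - 1)))
        (ENNReal.coe_le_one_iff.mp hq1)).toMeasure)
        {ω : V → Bool | ∀ s ∈ Ps, Real.sqrt n ≤ (s.length : ℝ) - 1 →
          ∃ x ∈ s.tail.dropLast, ω x = true} :=
  sampled_hits_long_paths_general n hn2 c hc hq1 Ps hcard hnodup

end Stmt4
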